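/- arXiv:2412.17625 — 3 statements merged into one kernel-verified Lean document; each statement's English description precedes it below -/
import Mathlib

section
/- Let $L > 0$, $0 \le \eta \le 1$, and let $A, B, C \in \mathbb{R}^2$ with $|A - B| = L$, satisfying $(C-A)\cdot(B-A) \ge 0$, $(C-B)\cdot(A-B) \ge 0$, and $|A-C| + |B-C| \le (1+\eta)L$. Then the distance $h$ from $C$ to the line segment $\mathrm{conv}(A,B)$ satisfies $h^2 \le \frac{1}{4}(\eta^2 + 2\eta) L^2$. -/
set_option maxHeartbeats 1000000
open Metric RealInnerProductSpace

/-- height bound for a point `C` between the orthogonal lines through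
`A` and `B`, with almost-minimal broken path length. -/
theorem stmt_0 (L η : ℝ) (hL : 0 < L) (hη0 : 0 ≤ η) (hη1 : η ≤ 1)
    (A B C : EuclideanSpace ℝ (Fin 2))
    (hAB : dist A B = L)
    (h1 : 0 ≤ ⟪C - A, B - A⟫)
    (h2 : 0 ≤ ⟪C - B, A - B⟫)
    (h3 : dist A C + dist B C ≤ (1 + η) * L) :
    (Metric.infDist C (segment ℝ A B)) ^ 2 ≤ (η ^ 2 + 2 * η) / 4 * L ^ 2 := by
  set w : EuclideanSpace ℝ (Fin 2) := B - A with hw_def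
  set v : EuclideanSpace ℝ (Fin 2) := C - A with hv_def
  have hw : ‖w‖ = L := by
    rw [← hAB, dist_eq_norm, hw_def, norm_sub_rev]
  have hww : ⟪w, w⟫ = L ^ 2 := by
    rw [real_inner_self_eq_norm_sq, hw]
  set ip : ℝ := ⟪v, w⟫ with hip_def
  have hip0 : 0 ≤ ip := h1
  have hipL : ip ≤ L ^ 2 := by
    have hCB : C - B = v - w := by rw [hv_def, hw_def]; abel
    have hABv : A - B = -w := by rw [hw_def]; abel
    have : 0 ≤ ⟪v - w, -w⟫ := by rw [← hCB, ← hABv]; exact h2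
    rw [inner_neg_right, inner_sub_left, hww] at this
    linarith
  have hCS : ip ^ 2 ≤ ‖v‖ ^ 2 * L ^ 2 := by
    have := abs_real_inner_le_norm v w
    have h' : ip ^ 2 ≤ (‖v‖ * ‖w‖) ^ 2 := by
      rw [← sq_abs ip]
      exact pow_le_pow_left₀ (abs_nonneg _) this 2
    rw [hw, mul_pow] at h'; exact h'
  -- the foot of the perpendicular
  set t : ℝ := ip / L ^ 2 with ht_def
  have hL2 : (0:ℝ) < L ^ 2 := by positivity
  have ht0 : 0 ≤ t := div_nonneg hip0 hL2.le
  have ht1 : t ≤ 1 := by rw [ht_def, div_le_one hL2]; exact hipL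
  set F : EuclideanSpace ℝ (Fin 2) := A + t • w with hF_def
  have hFmem : F ∈ segment ℝ A B := by
    refine ⟨1 - t, t, by linarith, ht0, by ring, ?_⟩
    rw [hF_def, hw_def]
    module
  have hle : Metric.infDist C (segment ℝ A B) ≤ dist C F :=
    Metric.infDist_le_dist_of_mem hFmem
  have hCF : dist C F ^ 2 = ‖v‖ ^ 2 - ip ^ 2 / L ^ 2 := by
    have hCFv : C - F = v - t • w := by rw [hF_def, hv_def]; abel
    rw [dist_eq_norm, hCFv, norm_sub_sq_real, real_inner_smul_right, norm_smul,
      mul_pow, hw, ← hip_def]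
    have : |t| ^ 2 = t ^ 2 := sq_abs t
    rw [Real.norm_eq_abs, this, ht_def]
    field_simp
    ring
  have hinf0 : 0 ≤ Metric.infDist C (segment ℝ A B) := Metric.infDist_nonneg
  have hsq : Metric.infDist C (segment ℝ A B) ^ 2 ≤ dist C F ^ 2 :=
    pow_le_pow_left₀ hinf0 hle 2
  rw [hCF] at hsq
  -- now the algebraic part
  set dA : ℝ := dist A C with hdA_def
  set dB : ℝ := dist B C with hdB_def
  have hdA0 : 0 ≤ dA := dist_nonneg
  have hdB0 : 0 ≤ dB := dist_nonneg
  have hdA : dA ^ 2 = ‖v‖ ^ 2 := by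
    rw [hdA_def, dist_eq_norm, hv_def, norm_sub_rev]
  have hdB : dB ^ 2 = ‖v‖ ^ 2 - 2 * ip + L ^ 2 := by
    have hBC : B - C = -(v - w) := by rw [hv_def, hw_def]; abel
    rw [hdB_def, dist_eq_norm, hBC, norm_neg, norm_sub_sq_real, hw, ← hip_def]
  set a : ℝ := ip / L with ha_def
  set b : ℝ := L - a with hb_def
  set H : ℝ := ‖v‖ ^ 2 - a ^ 2 with hH_def
  have ha0 : 0 ≤ a := div_nonneg hip0 hL.le
  have hb0 : 0 ≤ b := by
    rw [hb_def, ha_def, sub_nonneg, div_le_iff₀ hL]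
    have : L * L = L ^ 2 := by ring
    linarith [hipL]
  have haL : a * L = ip := by rw [ha_def]; field_simp
  have hH0 : 0 ≤ H := by
    rw [hH_def, ha_def, sub_nonneg, div_pow, div_le_iff₀ hL2]
    exact hCS
  have hdA2 : dA ^ 2 = a ^ 2 + H := by rw [hH_def]; linarith [hdA]
  have hdB2 : dB ^ 2 = b ^ 2 + H := by
    rw [hH_def, hb_def]; linear_combination hdB + 2 * haL
  -- key: a*b + H ≤ dA * dB
  have hkey : a * b + H ≤ dA * dB := by
    have hnn1 : 0 ≤ a * b + H := add_nonneg (mul_nonneg ha0 hb0) hH0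
    have hnn2 : 0 ≤ dA * dB := mul_nonneg hdA0 hdB0
    have hsqle : (a * b + H) ^ 2 ≤ (dA * dB) ^ 2 := by
      have he : (dA * dB) ^ 2 = (a ^ 2 + H) * (b ^ 2 + H) := by
        rw [mul_pow, hdA2, hdB2]
      rw [he]
      have hid : (a ^ 2 + H) * (b ^ 2 + H) - (a * b + H) ^ 2 = H * (a - b) ^ 2 := by
        ring
      linarith [mul_nonneg hH0 (sq_nonneg (a - b)), hid]
    exact (pow_le_pow_iff_left₀ hnn1 hnn2 two_ne_zero).mp hsqle
  have hsum : (dA + dB) ^ 2 ≤ (1 + η) ^ 2 * L ^ 2 := by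
    have h0 : 0 ≤ dA + dB := add_nonneg hdA0 hdB0
    calc (dA + dB) ^ 2 ≤ ((1 + η) * L) ^ 2 := pow_le_pow_left₀ h0 h3 2
      _ = (1 + η) ^ 2 * L ^ 2 := by ring
  have hH4 : 4 * H ≤ (η ^ 2 + 2 * η) * L ^ 2 := by
    have hab : a + b = L := by rw [hb_def]; ring
    have hab2 : a ^ 2 + 2 * (a * b) + b ^ 2 = L ^ 2 := by
      rw [show a ^ 2 + 2 * (a * b) + b ^ 2 = (a + b) ^ 2 by ring, hab]
    have e1 : (dA + dB) ^ 2 = dA ^ 2 + dB ^ 2 + 2 * (dA * dB) := by ring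
    have hexp : (1 + η) ^ 2 * L ^ 2 = L ^ 2 + (η ^ 2 + 2 * η) * L ^ 2 := by ring
    rw [e1, hdA2, hdB2] at hsum
    rw [hexp] at hsum
    linarith [hkey, hab2, hsum]
  have hgoal : ‖v‖ ^ 2 - ip ^ 2 / L ^ 2 = H := by
    rw [hH_def, ha_def, div_pow]
  rw [hgoal] at hsq
  linarith
end

section
/- Let $\gamma : [0,1] \to \overline{B_R} \subset \mathbb{R}^2$ be a rectifiable curve from $A \in \partial B_R$ to $B \in \partial B_R$ whose length satisfies $\mathrm{Length}(\gamma) \le (1+\eta)|A - B|$ for some $0 \le \eta \le 1$. Then every point $y$ on the curve satisfies $\mathrm{dist}(y, \mathrm{conv}(A,B)) \le C \sqrt{\eta}\, |A - B|$ for a universal constant $C$ (one may take $C = 2$). -/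
/-!
If `L = |Ay| + |yB|`, the point of `[A, B]` dividing it in the ratio `|Ay| : |yB|` lies within
`√(L² - |AB|²) / 2` of `y`: this follows from Stewart's formula and `4 |Ay| |yB| ≤ L²`. Every point
`y = γ t` of the curve has `L ≤ Length(γ) ≤ (1 + η) |AB|`, whence `L² - |AB|² ≤ 3η |AB|²`.
-/

open Metric

section
variable {E : Type*} [NormedAddCommGroup E] [InnerProductSpace ℝ E]

theorem norm_sub_smul_add_smul_sq {p q : ℝ} (hpq : p + q = 1) (y a b : E) :
    ‖y - (p • a + q • b)‖ ^ 2 = p * ‖y - a‖ ^ 2 + q * ‖y - b‖ ^ 2 - p * q * ‖a - b‖ ^ 2 := by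
  have hy : y - (p • a + q • b) = p • (y - a) + q • (y - b) := by
    calc y - (p • a + q • b) = (p + q) • y - (p • a + q • b) := by rw [hpq, one_smul]
      _ = p • (y - a) + q • (y - b) := by module
  have hab : a - b = (y - b) - (y - a) := by abel
  rw [hy, hab, norm_add_sq_real, norm_sub_sq_real (y - b), norm_smul, norm_smul,
    real_inner_smul_left, real_inner_smul_right, real_inner_comm (y - a)]
  simp only [Real.norm_eq_abs, mul_pow, sq_abs]
  rw [show q = 1 - p by linarith]
  ring

theorem four_mul_infDist_segment_sq_le (y a b : E) :
    4 * infDist y (segment ℝ a b) ^ 2 ≤ (dist a y + dist y b) ^ 2 - dist a b ^ 2 := by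
  rcases eq_or_ne a y with rfl | hay
  · simp [infDist_zero_of_mem (left_mem_segment ℝ a b)]
  set s := dist a y
  set t := dist y b
  have hs : 0 ≤ s := dist_nonneg
  have ht : 0 ≤ t := dist_nonneg
  have htri : dist a b ≤ s + t := dist_triangle a y b
  have hL : 0 < s + t := add_pos_of_pos_of_nonneg (dist_pos.2 hay) ht
  set p := t / (s + t)
  set q := s / (s + t)
  have hpq : p + q = 1 := by rw [← add_div, add_comm, div_self hL.ne']
  have hmem : p • a + q • b ∈ segment ℝ a b := ⟨p, q, by positivity, by positivity, hpq, rfl⟩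
  have hfoot : dist y (p • a + q • b) ^ 2 = s * t * ((s + t) ^ 2 - dist a b ^ 2) / (s + t) ^ 2 := by
    rw [dist_eq_norm, norm_sub_smul_add_smul_sq hpq, ← dist_eq_norm, ← dist_eq_norm,
      ← dist_eq_norm, dist_comm y a]
    simp only [p, q, s, t]
    field_simp
  have hinf : infDist y (segment ℝ a b) ≤ dist y (p • a + q • b) := infDist_le_dist_of_mem hmem
  have hamgm : 4 * (s * t) ≤ (s + t) ^ 2 := by nlinarith [sq_nonneg (s - t)]
  calc 4 * infDist y (segment ℝ a b) ^ 2 ≤ 4 * dist y (p • a + q • b) ^ 2 := by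
        gcongr; exact infDist_nonneg
    _ = 4 * (s * t) * ((s + t) ^ 2 - dist a b ^ 2) / (s + t) ^ 2 := by rw [hfoot]; ring
    _ ≤ (s + t) ^ 2 * ((s + t) ^ 2 - dist a b ^ 2) / (s + t) ^ 2 := by
        gcongr; nlinarith [dist_nonneg (x := a) (y := b)]
    _ = (s + t) ^ 2 - dist a b ^ 2 := by field_simp

theorem infDist_segment_le_of_dist_add_dist_le {η : ℝ} (hη0 : 0 ≤ η) (hη1 : η ≤ 1) {y a b : E}
    (h : dist a y + dist y b ≤ (1 + η) * dist a b) :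
    infDist y (segment ℝ a b) ≤ 2 * √η * dist a b := by
  have hd : 0 ≤ dist a b := dist_nonneg
  have hsq : infDist y (segment ℝ a b) ^ 2 ≤ (2 * √η * dist a b) ^ 2 := by
    have := four_mul_infDist_segment_sq_le y a b
    rw [mul_pow, mul_pow, Real.sq_sqrt hη0]
    nlinarith [pow_le_pow_left₀ (by positivity) h 2, mul_nonneg hη0 (sq_nonneg (dist a b))]
  exact (pow_le_pow_iff_left₀ infDist_nonneg (by positivity) two_ne_zero).1 hsq
end

theorem eVariationOn.edist_add_edist_le {α E : Type*} [LinearOrder α] [PseudoEMetricSpace E]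
    (f : α → E) {a b c : α} (hab : a ≤ b) (hbc : b ≤ c) :
    edist (f a) (f b) + edist (f b) (f c) ≤ eVariationOn f (Set.Icc a c) := by
  have hsplit := eVariationOn.Icc_add_Icc f (s := Set.univ) hab hbc (Set.mem_univ b)
  simp only [Set.univ_inter] at hsplit
  rw [← hsplit]
  exact add_le_add (eVariationOn.edist_le f (by simp [hab]) (by simp [hab]))
    (eVariationOn.edist_le f (by simp [hbc]) (by simp [hbc]))

theorem stmt_2_general (η : ℝ) (hη0 : 0 ≤ η) (hη1 : η ≤ 1)
    (A B : EuclideanSpace ℝ (Fin 2))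
    (γ : ℝ → EuclideanSpace ℝ (Fin 2))
    (h0 : γ 0 = A) (h1 : γ 1 = B)
    (hlen : eVariationOn γ (Set.Icc 0 1) ≤ ENNReal.ofReal ((1 + η) * dist A B)) :
    ∀ t ∈ Set.Icc (0 : ℝ) 1,
      Metric.infDist (γ t) (segment ℝ A B) ≤ 2 * Real.sqrt η * dist A B := by
  rintro t ⟨ht0, ht1⟩
  have hsum := (eVariationOn.edist_add_edist_le γ ht0 ht1).trans hlen
  rw [edist_dist, edist_dist, ← ENNReal.ofReal_add dist_nonneg dist_nonneg,
    ENNReal.ofReal_le_ofReal_iff (by positivity), h0, h1] at hsum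
  exact infDist_segment_le_of_dist_add_dist_le hη0 hη1 hsum

/-- height bound. A rectifiable curve in the closed ball `B_R` from `A` to `B`
(on the boundary sphere) of length at most `(1+η)|A-B|` stays within distance
`2√η · |A-B|` of the segment `conv(A,B)`. -/
theorem stmt_2 (R η : ℝ) (hR : 0 < R) (hη0 : 0 ≤ η) (hη1 : η ≤ 1)
    (A B : EuclideanSpace ℝ (Fin 2)) (hA : ‖A‖ = R) (hB : ‖B‖ = R)
    (γ : ℝ → EuclideanSpace ℝ (Fin 2))
    (hcont : ContinuousOn γ (Set.Icc 0 1))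
    (hmaps : ∀ t ∈ Set.Icc (0 : ℝ) 1, ‖γ t‖ ≤ R)
    (h0 : γ 0 = A) (h1 : γ 1 = B)
    (hlen : eVariationOn γ (Set.Icc 0 1) ≤ ENNReal.ofReal ((1 + η) * dist A B)) :
    ∀ t ∈ Set.Icc (0 : ℝ) 1,
      Metric.infDist (γ t) (segment ℝ A B) ≤ 2 * Real.sqrt η * dist A B :=
  stmt_2_general η hη0 hη1 A B γ h0 h1 hlen
end

section
/- Let $(T, d_T)$ and $(M, d_M)$ be metric spaces, $T$ finite with $|T| \ge 2$, and let $f : M \to T$ be surjective with $d_T(f(a), f(b)) \le K\, d_M(a,b)^{1/2}$ for all $a, b \in M$ and some $K > 0$. Then $\gamma_2(T, d_T) \le C K (\log \log |T|)^{3/4}\, \gamma_{1,2}(M, d_M)^{1/2}$ for a universal constant $C$, where $\gamma_2(T,d) = \inf \sup_{t} \sum_{k\ge 0} 2^{k/2} \mathrm{diam}(A_k(t))$ and $\gamma_{1,2}(M,d) = \inf \sup_{t} (\sum_{k \ge 0} (2^k \mathrm{diam}(A_k(t)))^2)^{1/2}$, with infima over admissible partition sequences $\{\mathscr{A}_k\}$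 (increasing partitions with $|\mathscr{A}_k| \le 2^{2^k}$) and $A_k(t)$ the element of $\mathscr{A}_k$ containing $t$. -/
open scoped ENNReal

/-- An admissible sequence of partitions: each `𝒜 k` is a partition, the sequence is
increasing (each `𝒜 (k+1)` refines `𝒜 k`), and `|𝒜 k| ≤ 2^(2^k)`. -/
def IsAdmissibleSeq (α : Type*) (𝒜 : ℕ → Set (Set α)) : Prop :=
  (∀ k, Setoid.IsPartition (𝒜 k)) ∧
  (∀ k, ∀ A ∈ 𝒜 (k + 1), ∃ B ∈ 𝒜 k, A ⊆ B) ∧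
  (∀ k, (𝒜 k).Finite ∧ (𝒜 k).ncard ≤ 2 ^ 2 ^ k)

/-- The diameter of the element `A_k(t)` of the partition `𝒜 k` containing `t`. -/
noncomputable def chainDiam {α : Type*} [PseudoEMetricSpace α]
    (𝒜 : ℕ → Set (Set α)) (k : ℕ) (t : α) : ℝ≥0∞ :=
  ⨆ A ∈ {A ∈ 𝒜 k | t ∈ A}, EMetric.diam A

/-- Talagrand's `γ₂` functional. -/
noncomputable def gamma2 (α : Type*) [PseudoEMetricSpace α] : ℝ≥0∞ :=
  ⨅ 𝒜 ∈ {𝒜 : ℕ → Set (Set α) | IsAdmissibleSeq α 𝒜},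
    ⨆ t : α, ∑' k : ℕ, (2 : ℝ≥0∞) ^ ((k : ℝ) / 2) * chainDiam 𝒜 k t

/-- Talagrand's `γ₁,₂` functional. -/
noncomputable def gamma12 (α : Type*) [PseudoEMetricSpace α] : ℝ≥0∞ :=
  ⨅ 𝒜 ∈ {𝒜 : ℕ → Set (Set α) | IsAdmissibleSeq α 𝒜},
    ⨆ t : α, (∑' k : ℕ, ((2 : ℝ≥0∞) ^ (k : ℕ) * chainDiam 𝒜 k t) ^ 2) ^ ((1 : ℝ) / 2)

/-!
Pull an admissible sequence `𝒜` of `M` back to `T` along a right inverse `g` of `f`. Since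
`d_T(x, y) ≤ K d_M(g x, g y)^{1/2}`, the pulled-back cells satisfy
`diam B_k(t) ≤ K (diam A_k(g t))^{1/2}`; from the first level `n` with `|T| ≤ 2^{2^n}` on, the
partitions of `T` may be taken to be singletons, which contribute nothing. The chaining sum of `T`
is then at most `K ∑_{k<n} (2^k diam A_k(g t))^{1/2}`, which Hölder's inequality with exponents
`(4/3, 4)` bounds by `K n^{3/4} (∑_k (2^k diam A_k(g t))^2)^{1/4}`. Finally `n ≲ log log |T|`.
-/

open scoped NNReal

theorem ENNReal.le_mul_iInf_rpow {ι : Type*} [Nonempty ι] {a D : ℝ≥0∞} (hD : D ≠ ∞) {p : ℝ}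
    (hp : 0 < p) {S : ι → ℝ≥0∞} (h : ∀ i, a ≤ D * S i ^ p) : a ≤ D * (⨅ i, S i) ^ p := by
  have := (ENNReal.orderIsoRpow p hp).map_iInf S
  simp only [ENNReal.orderIsoRpow_apply] at this
  rw [this, ENNReal.mul_iInf (by simp [hD])]
  exact le_iInf h

theorem ENNReal.sum_rpow_half_le {ι : Type*} (s : Finset ι) (y : ι → ℝ≥0∞) :
    ∑ i ∈ s, y i ^ (1 / 2 : ℝ) ≤
      (s.card : ℝ≥0∞) ^ (3 / 4 : ℝ) * (∑ i ∈ s, y i ^ 2) ^ (1 / 4 : ℝ) := by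
  have hpq : (4 / 3 : ℝ).HolderConjugate 4 := Real.holderConjugate_iff.2 ⟨by norm_num, by norm_num⟩
  have := ENNReal.inner_le_Lp_mul_Lq s (fun _ => 1) (fun i => y i ^ (1 / 2 : ℝ)) hpq
  convert this using 3 with i
  · simp
  · simp
  · norm_num
  · refine Finset.sum_congr rfl fun i _ => ?_
    rw [← ENNReal.rpow_mul, ← ENNReal.rpow_natCast]
    norm_num

theorem exists_isAdmissibleSeq (α : Type*) : ∃ 𝒜, IsAdmissibleSeq α 𝒜 := by
  have hsub : (⊤ : Setoid α).classes ⊆ {Set.univ} := by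
    rintro _ ⟨x, rfl⟩
    simp
  refine ⟨fun _ => (⊤ : Setoid α).classes, fun _ => Setoid.isPartition_classes _,
    fun _ A hA => ⟨A, hA, le_rfl⟩, fun k => ⟨(Set.finite_singleton _).subset hsub, ?_⟩⟩
  calc _ ≤ ({Set.univ} : Set (Set α)).ncard := Set.ncard_le_ncard hsub
    _ ≤ 2 ^ 2 ^ k := by simpa using Nat.one_le_two_pow

section Partitions

variable {α β : Type*}

def partitionPreimage (g : β → α) (P : Set (Set α)) : Set (Set β) :=
  Set.preimage g '' P \ {∅}

theorem mem_partitionPreimage {g : β → α} {P : Set (Set α)} {B : Set β} :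
    B ∈ partitionPreimage g P ↔ ∃ A ∈ P, g ⁻¹' A = B ∧ B.Nonempty := by
  simp only [partitionPreimage, Set.mem_sdiff, Set.mem_image, Set.mem_singleton_iff,
    Set.nonempty_iff_ne_empty]
  aesop

theorem Setoid.IsPartition.partitionPreimage {P : Set (Set α)} (hP : Setoid.IsPartition P)
    (g : β → α) : Setoid.IsPartition (partitionPreimage g P) := by
  refine ⟨fun h => ?_, fun b => ?_⟩
  · obtain ⟨-, -, -, hne⟩ := mem_partitionPreimage.1 h
    exact hne.ne_empty rfl
  obtain ⟨A, ⟨hA, hbA⟩, huniq⟩ := hP.2 (g b)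
  refine ⟨g ⁻¹' A, ⟨mem_partitionPreimage.2 ⟨A, hA, rfl, b, hbA⟩, hbA⟩, ?_⟩
  rintro B ⟨hB, hbB⟩
  obtain ⟨A', hA', rfl, -⟩ := mem_partitionPreimage.1 hB
  rw [huniq A' ⟨hA', hbB⟩]

theorem Set.Finite.partitionPreimage {P : Set (Set α)} (hP : P.Finite) (g : β → α) :
    (partitionPreimage g P).Finite :=
  (hP.image _).sdiff

theorem ncard_partitionPreimage_le {P : Set (Set α)} (hP : P.Finite) (g : β → α) :
    (partitionPreimage g P).ncard ≤ P.ncard :=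
  (Set.ncard_le_ncard Set.sdiff_subset (hP.image _)).trans (Set.ncard_image_le hP)

theorem exists_superset_mem_partitionPreimage {P Q : Set (Set α)}
    (hPQ : ∀ A ∈ P, ∃ A' ∈ Q, A ⊆ A') (g : β → α) :
    ∀ B ∈ partitionPreimage g P, ∃ B' ∈ partitionPreimage g Q, B ⊆ B' := by
  intro B hB
  obtain ⟨A, hA, rfl, hne⟩ := mem_partitionPreimage.1 hB
  obtain ⟨A', hA', hAA'⟩ := hPQ A hA
  exact ⟨g ⁻¹' A', mem_partitionPreimage.2 ⟨A', hA', rfl, hne.mono (Set.preimage_mono hAA')⟩,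
    Set.preimage_mono hAA'⟩

theorem isPartition_range_singleton : Setoid.IsPartition (Set.range ({·} : α → Set α)) := by
  refine ⟨fun ⟨a, ha⟩ => Set.singleton_ne_empty a ha, fun a => ⟨{a}, ⟨⟨a, rfl⟩, rfl⟩, ?_⟩⟩
  rintro _ ⟨⟨b, rfl⟩, hab⟩
  rw [Set.mem_singleton_iff.1 hab]

theorem Setoid.IsPartition.exists_singleton_subset {P : Set (Set α)} (hP : Setoid.IsPartition P)
    (a : α) : ∃ A ∈ P, {a} ⊆ A := by
  obtain ⟨A, ⟨hA, haA⟩, -⟩ := hP.2 a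
  exact ⟨A, hA, Set.singleton_subset_iff.2 haA⟩

end Partitions

section TruncatedPullback

variable {α β : Type*}

def truncatedPullback (g : β → α) (𝒜 : ℕ → Set (Set α)) (n k : ℕ) : Set (Set β) :=
  if k < n then partitionPreimage g (𝒜 k) else Set.range ({·} : β → Set β)

theorem isAdmissibleSeq_truncatedPullback [Finite β] {𝒜 : ℕ → Set (Set α)}
    (h𝒜 : IsAdmissibleSeq α 𝒜) (g : β → α) {n : ℕ} (hn : Nat.card β ≤ 2 ^ 2 ^ n) :
    IsAdmissibleSeq β (truncatedPullback g 𝒜 n) := by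
  have hpart : ∀ k, Setoid.IsPartition (truncatedPullback g 𝒜 n k) := fun k => by
    unfold truncatedPullback
    split_ifs
    exacts [(h𝒜.1 k).partitionPreimage g, isPartition_range_singleton]
  refine ⟨hpart, fun k => ?_, fun k => ?_⟩
  · by_cases hk : k + 1 < n
    · simp only [truncatedPullback, if_pos hk, if_pos (Nat.lt_of_succ_lt hk)]
      exact exists_superset_mem_partitionPreimage (h𝒜.2.1 k) g
    · rintro _ hB
      simp only [truncatedPullback, if_neg hk] at hB
      obtain ⟨b, rfl⟩ := hB
      exact (hpart k).exists_singleton_subset b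
  · unfold truncatedPullback
    split_ifs with hk
    · exact ⟨(h𝒜.2.2 k).1.partitionPreimage g,
        (ncard_partitionPreimage_le (h𝒜.2.2 k).1 g).trans (h𝒜.2.2 k).2⟩
    · refine ⟨Set.finite_range _, ?_⟩
      rw [Set.ncard_range_of_injective Set.singleton_injective]
      exact hn.trans (Nat.pow_le_pow_right two_pos (Nat.pow_le_pow_right two_pos (not_lt.1 hk)))

end TruncatedPullback

section ChainDiam

variable {α β : Type*} [PseudoEMetricSpace α] [PseudoEMetricSpace β]

theorem chainDiam_le {𝒜 : ℕ → Set (Set α)} {k : ℕ} {t : α} {c : ℝ≥0∞}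
    (h : ∀ A ∈ 𝒜 k, t ∈ A → Metric.ediam A ≤ c) : chainDiam 𝒜 k t ≤ c :=
  iSup₂_le fun A hA => h A hA.1 hA.2

theorem ediam_le_chainDiam {𝒜 : ℕ → Set (Set α)} {k : ℕ} {t : α} {A : Set α} (hA : A ∈ 𝒜 k)
    (ht : t ∈ A) : Metric.ediam A ≤ chainDiam 𝒜 k t :=
  le_iSup₂ (f := fun A (_ : A ∈ {A ∈ 𝒜 k | t ∈ A}) => Metric.ediam A) A ⟨hA, ht⟩

theorem ediam_preimage_le {g : β → α} {c : ℝ≥0∞} {p : ℝ} (hp : 0 ≤ p)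
    (hg : ∀ x y, edist x y ≤ c * edist (g x) (g y) ^ p) (A : Set α) :
    Metric.ediam (g ⁻¹' A) ≤ c * Metric.ediam A ^ p :=
  Metric.ediam_le fun x hx y hy => (hg x y).trans <| by
    gcongr
    exact Metric.edist_le_ediam_of_mem hx hy

theorem chainDiam_truncatedPullback_le {g : β → α} {c : ℝ≥0∞} {p : ℝ} (hp : 0 ≤ p)
    (hg : ∀ x y, edist x y ≤ c * edist (g x) (g y) ^ p) (𝒜 : ℕ → Set (Set α)) {n k : ℕ}
    (hk : k < n) (t : β) :
    chainDiam (truncatedPullback g 𝒜 n) k t ≤ c * chainDiam 𝒜 k (g t) ^ p := by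
  refine chainDiam_le fun B hB htB => ?_
  rw [truncatedPullback, if_pos hk] at hB
  obtain ⟨A, hA, rfl, -⟩ := mem_partitionPreimage.1 hB
  exact (ediam_preimage_le hp hg A).trans (by gcongr; exact ediam_le_chainDiam hA htB)

end ChainDiam

theorem chainDiam_truncatedPullback_eq_zero {α β : Type*} [PseudoEMetricSpace β] (g : β → α)
    (𝒜 : ℕ → Set (Set α)) {n k : ℕ} (hk : n ≤ k) (t : β) :
    chainDiam (truncatedPullback g 𝒜 n) k t = 0 := by
  refine le_antisymm (chainDiam_le fun B hB _ => ?_) zero_le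
  rw [truncatedPullback, if_neg (not_lt.2 hk)] at hB
  obtain ⟨b, rfl⟩ := hB
  exact Metric.ediam_singleton.le

section Gamma

variable {M T : Type*} [PseudoEMetricSpace M] [PseudoEMetricSpace T]

theorem tsum_chainDiam_truncatedPullback_le {g : T → M} {c : ℝ≥0∞}
    (hg : ∀ x y, edist x y ≤ c * edist (g x) (g y) ^ (1 / 2 : ℝ)) (𝒜 : ℕ → Set (Set M)) (n : ℕ)
    (t : T) :
    ∑' k : ℕ, (2 : ℝ≥0∞) ^ ((k : ℝ) / 2) * chainDiam (truncatedPullback g 𝒜 n) k t ≤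
      c * (n : ℝ≥0∞) ^ (3 / 4 : ℝ) *
        ((∑' k : ℕ, ((2 : ℝ≥0∞) ^ k * chainDiam 𝒜 k (g t)) ^ 2) ^ (1 / 2 : ℝ)) ^ (1 / 2 : ℝ) := by
  set y : ℕ → ℝ≥0∞ := fun k => (2 : ℝ≥0∞) ^ k * chainDiam 𝒜 k (g t)
  rw [tsum_eq_sum (s := Finset.range n) fun k hk => by
    rw [chainDiam_truncatedPullback_eq_zero g 𝒜 (by simpa using hk), mul_zero]]
  have hterm : ∀ k ∈ Finset.range n,
      (2 : ℝ≥0∞) ^ ((k : ℝ) / 2) * chainDiam (truncatedPullback g 𝒜 n) k t ≤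
        c * y k ^ (1 / 2 : ℝ) := fun k hk => by
    have hpow : (2 : ℝ≥0∞) ^ ((k : ℝ) / 2) = ((2 : ℝ≥0∞) ^ k) ^ (1 / 2 : ℝ) := by
      rw [← ENNReal.rpow_natCast, ← ENNReal.rpow_mul, mul_one_div]
    calc _ ≤ (2 : ℝ≥0∞) ^ ((k : ℝ) / 2) * (c * chainDiam 𝒜 k (g t) ^ (1 / 2 : ℝ)) := by
          gcongr
          exact chainDiam_truncatedPullback_le (by norm_num) hg 𝒜 (Finset.mem_range.1 hk) t
      _ = c * y k ^ (1 / 2 : ℝ) := by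
          rw [hpow, ENNReal.mul_rpow_of_nonneg _ _ (by norm_num)]
          ring
  calc _ ≤ ∑ k ∈ Finset.range n, c * y k ^ (1 / 2 : ℝ) := Finset.sum_le_sum hterm
    _ = c * ∑ k ∈ Finset.range n, y k ^ (1 / 2 : ℝ) := (Finset.mul_sum _ _ _).symm
    _ ≤ c * ((n : ℝ≥0∞) ^ (3 / 4 : ℝ) * (∑ k ∈ Finset.range n, y k ^ 2) ^ (1 / 4 : ℝ)) := by
          gcongr
          simpa using ENNReal.sum_rpow_half_le (Finset.range n) y
    _ ≤ c * ((n : ℝ≥0∞) ^ (3 / 4 : ℝ) * ((∑' k, y k ^ 2) ^ (1 / 2 : ℝ)) ^ (1 / 2 : ℝ)) := by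
          rw [← ENNReal.rpow_mul, show (1 / 2 : ℝ) * (1 / 2) = 1 / 4 by norm_num]
          gcongr
          exact ENNReal.sum_le_tsum _
    _ = _ := (mul_assoc _ _ _).symm

theorem gamma2_le_of_edist_le_rpow_half [Finite T] (g : T → M) (c : ℝ≥0)
    (hg : ∀ x y, edist x y ≤ c * edist (g x) (g y) ^ (1 / 2 : ℝ)) {n : ℕ}
    (hn : Nat.card T ≤ 2 ^ 2 ^ n) :
    gamma2 T ≤ c * (n : ℝ≥0∞) ^ (3 / 4 : ℝ) * gamma12 M ^ (1 / 2 : ℝ) := by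
  rw [gamma12, iInf_subtype']
  have : Nonempty {𝒜 // 𝒜 ∈ {𝒜 : ℕ → Set (Set M) | IsAdmissibleSeq M 𝒜}} :=
    nonempty_subtype.2 (exists_isAdmissibleSeq M)
  refine ENNReal.le_mul_iInf_rpow (by finiteness) one_half_pos fun ⟨𝒜, h𝒜⟩ => ?_
  rw [gamma2]
  refine (iInf₂_le _ (isAdmissibleSeq_truncatedPullback h𝒜 g hn)).trans (iSup_le fun t => ?_)
  refine (tsum_chainDiam_truncatedPullback_le hg 𝒜 n t).trans ?_
  gcongr
  exact le_iSup (fun m => (∑' k : ℕ, ((2 : ℝ≥0∞) ^ k * chainDiam 𝒜 k m) ^ 2) ^ (1 / 2 : ℝ)) (g t)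

end Gamma

open Real in
theorem one_div_sixteen_le_log_log_three : 1 / 16 ≤ log (log 3) := by
  have hlog3 : 16 / 15 ≤ log 3 := by
    have h : log ((2 : ℝ) ^ 17) ≤ log ((3 : ℝ) ^ 11) := log_le_log (by norm_num) (by norm_num)
    rw [log_pow, log_pow] at h
    push_cast at h
    linarith [log_two_gt_d9]
  have h := one_sub_inv_le_log_of_pos (lt_of_lt_of_le (by norm_num) hlog3)
  have : (log 3)⁻¹ ≤ 15 / 16 := by
    rw [inv_le_comm₀ (by linarith) (by norm_num)]
    linarith
  linarith

open Real in
theorem succ_le_sixteen_mul_log_log {m N : ℕ} (hN : 3 ≤ N) (hmN : 2 ^ 2 ^ m < N) :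
    (m + 1 : ℝ) ≤ 16 * log (log N) := by
  have hlog2 := log_two_gt_d9
  have hlog3 : log (log 3) ≤ log (log N) :=
    log_le_log (log_pos (by norm_num)) (log_le_log (by norm_num) (by exact_mod_cast hN))
  rcases Nat.eq_zero_or_pos m with rfl | hm
  · norm_num
    linarith [one_div_sixteen_le_log_log_three]
  have hpow : (2 : ℝ) ^ 2 ^ m ≤ N := by exact_mod_cast hmN.le
  have hlogN : 2 ^ m * log 2 ≤ log N := by
    simpa [log_pow] using log_le_log (by positivity) hpow
  have hloglogN : m * log 2 + log (log 2) ≤ log (log N) := by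
    have := log_le_log (by positivity) hlogN
    rwa [log_mul (by positivity) (by positivity), log_pow] at this
  have hloglog2 : -(1 / 2) ≤ log (log 2) := by
    have h := one_sub_inv_le_log_of_pos (log_pos one_lt_two)
    have : (log 2)⁻¹ ≤ 3 / 2 := by
      rw [inv_le_comm₀ (by linarith) (by norm_num)]
      linarith
    linarith
  have : (1 : ℝ) ≤ m := by exact_mod_cast hm
  nlinarith

theorem exists_le_two_pow_two_pow_and_le_log_log {N : ℕ} (hN : 3 ≤ N) :
    ∃ n : ℕ, N ≤ 2 ^ 2 ^ n ∧ (n : ℝ) ≤ 16 * Real.log (Real.log N) := by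
  classical
  have hex : ∃ n, N ≤ 2 ^ 2 ^ n :=
    ⟨N, (Nat.lt_two_pow_self).le.trans (Nat.pow_le_pow_right two_pos Nat.lt_two_pow_self.le)⟩
  obtain ⟨m, hm⟩ : ∃ m, Nat.find hex = m + 1 :=
    Nat.exists_eq_succ_of_ne_zero fun h => by have := Nat.find_spec hex; rw [h] at this; omega
  refine ⟨m + 1, hm ▸ Nat.find_spec hex, ?_⟩
  have hmN : 2 ^ 2 ^ m < N := not_le.1 (Nat.find_min hex (by omega))
  exact_mod_cast succ_le_sixteen_mul_log_log hN hmN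

theorem rpow_three_div_four_le_of_le_sixteen_mul {x L : ℝ} (hx : 0 ≤ x) (h : x ≤ 16 * L) :
    x ^ (3 / 4 : ℝ) ≤ 8 * L ^ (3 / 4 : ℝ) :=
  calc x ^ (3 / 4 : ℝ) ≤ (16 * L) ^ (3 / 4 : ℝ) := Real.rpow_le_rpow hx h (by norm_num)
    _ = 8 * L ^ (3 / 4 : ℝ) := by
      rw [Real.mul_rpow (by norm_num) (by linarith), show (16 : ℝ) = 2 ^ (4 : ℝ) by norm_num,
        ← Real.rpow_mul (by norm_num)]
      norm_num

theorem edist_le_ofReal_mul_rpow_half {M T : Type*} [PseudoMetricSpace M] [PseudoMetricSpace T]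
    {f : M → T} {K : ℝ} (hK : 0 ≤ K) (hf : ∀ a b, dist (f a) (f b) ≤ K * Real.sqrt (dist a b))
    (a b : M) : edist (f a) (f b) ≤ ENNReal.ofReal K * edist a b ^ (1 / 2 : ℝ) := by
  rw [edist_dist, edist_dist, ENNReal.ofReal_rpow_of_nonneg dist_nonneg (by norm_num),
    ← ENNReal.ofReal_mul hK, ← Real.sqrt_eq_rpow]
  exact ENNReal.ofReal_le_ofReal (hf a b)

/-- Talagrand, Lemma 3.4.6: if `T` is finite with `|T| ≥ 2` and
`f : M → T` is surjective with `d_T(f a, f b) ≤ K d_M(a,b)^{1/2}`, then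
`γ₂(T) ≤ C K (log log |T|)^{3/4} γ₁,₂(M)^{1/2}` for a universal constant `C`. -/
theorem stmt_19 :
    ∃ C : ℝ, 0 < C ∧
      ∀ (M T : Type) [MetricSpace M] [MetricSpace T] [Finite T],
        2 ≤ Nat.card T →
        ∀ (f : M → T) (K : ℝ), 0 < K →
          Function.Surjective f →
          (∀ a b : M, dist (f a) (f b) ≤ K * Real.sqrt (dist a b)) →
          gamma2 T ≤
            ENNReal.ofReal
                (C * K * Real.log (Real.log (Nat.card T)) ^ ((3 : ℝ) / 4)) *
              gamma12 M ^ ((1 : ℝ) / 2) := by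
  refine ⟨8, by norm_num, fun M T _ _ _ hT f K hK hf hlip => ?_⟩
  set g := Function.surjInv hf
  have hg (x y : T) : edist x y ≤ ENNReal.ofReal K * edist (g x) (g y) ^ (1 / 2 : ℝ) := by
    simpa only [g, Function.surjInv_eq hf] using
      edist_le_ofReal_mul_rpow_half hK.le hlip (g x) (g y)
  rcases hT.eq_or_lt with hT2 | hT3
  -- `log log 2 < 0`, so the right-hand side vanishes; but so does `γ₂(T)`, with `n = 0`.
  · have := gamma2_le_of_edist_le_rpow_half g K.toNNReal hg (n := 0) (by omega)
    simp only [CharP.cast_eq_zero, ENNReal.zero_rpow_of_pos (by norm_num : (0 : ℝ) < 3 / 4),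
      mul_zero, zero_mul, nonpos_iff_eq_zero] at this
    simp [this]
  obtain ⟨n, hn, hnL⟩ := exists_le_two_pow_two_pow_and_le_log_log hT3
  have hn34 := rpow_three_div_four_le_of_le_sixteen_mul n.cast_nonneg hnL
  calc gamma2 T ≤ ENNReal.ofReal K * (n : ℝ≥0∞) ^ (3 / 4 : ℝ) * gamma12 M ^ (1 / 2 : ℝ) :=
        gamma2_le_of_edist_le_rpow_half g K.toNNReal hg hn
    _ ≤ _ := by
        rw [← ENNReal.ofReal_natCast, ENNReal.ofReal_rpow_of_nonneg n.cast_nonneg (by norm_num),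
          ← ENNReal.ofReal_mul hK.le]
        gcongr ENNReal.ofReal ?_ * _
        nlinarith
end
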